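/- In the Plackett–Luce model with distinct values, for any permutation σ with v_{σ_1} > v_{σ_j} (j > 1) and σ̃ equal to σ with positions 1 and j swapped, the ratio P[σ]/P[σ̃] = ∏_{k=2}^{j} (e^{v_{σ_1}/β} + Σ_{ℓ=k, ℓ≠j}^{n} e^{v_{σ_ℓ}/β}) / (e^{v_{σ_j}/β} + Σ_{ℓ=k, ℓ≠j}^{n} e^{v_{σ_ℓ}/β}) ≥ 1. Hence Plackett–Luce is inversion-monotone for swaps involving the top position. -/
import Mathlib


open Finset

/-- Plackett–Luce probability of observing the ordering `σ` (rank `k` holds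
item `σ k`) for values `v` and Gumbel noise scale `β`. -/
noncomputable def PLProb {n : ℕ} (β : ℝ) (v : Fin n → ℝ) (σ : Equiv.Perm (Fin n)) : ℝ :=
  ∏ k : Fin n,
    Real.exp (v (σ k) / β) /
      ∑ ℓ ∈ Finset.univ.filter (fun ℓ : Fin n => k ≤ ℓ), Real.exp (v (σ ℓ) / β)

/-- In the Plackett–Luce model with distinct values, for any
permutation `σ` with `v (σ 0) > v (σ j)` (ranks 0-indexed, `j > 0`) and `σ̃`
equal to `σ` with positions `0` and `j` swapped,
`P[σ]/P[σ̃] = ∏_{k=1}^{j} (e^{v_{σ 0}/β} + Σ_{ℓ≥k, ℓ≠j} e^{v_{σ ℓ}/β}) /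
(e^{v_{σ j}/β} + Σ_{ℓ≥k, ℓ≠j} e^{v_{σ ℓ}/β}) ≥ 1`; hence Plackett–Luce is
inversion-monotone for swaps involving the top position. -/
theorem stmt15
    (n : ℕ) (β : ℝ) (hβ : 0 < β) (v : Fin n → ℝ) (hv : Function.Injective v)
    (σ : Equiv.Perm (Fin n)) (z j : Fin n) (hz : (z : ℕ) = 0)
    (hj : 0 < (j : ℕ)) (hval : v (σ j) < v (σ z)) :
    PLProb β v σ / PLProb β v (σ * Equiv.swap z j) =
        (∏ k ∈ Finset.univ.filter (fun k : Fin n => 1 ≤ (k : ℕ) ∧ (k : ℕ) ≤ (j : ℕ)),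
          (Real.exp (v (σ z) / β) +
              ∑ ℓ ∈ Finset.univ.filter (fun ℓ : Fin n => k ≤ ℓ ∧ ℓ ≠ j),
                Real.exp (v (σ ℓ) / β)) /
            (Real.exp (v (σ j) / β) +
              ∑ ℓ ∈ Finset.univ.filter (fun ℓ : Fin n => k ≤ ℓ ∧ ℓ ≠ j),
                Real.exp (v (σ ℓ) / β))) ∧
      1 ≤ PLProb β v σ / PLProb β v (σ * Equiv.swap z j) := by
  classical
  set E : Fin n → ℝ := fun i => Real.exp (v (σ i) / β) with hEdef
  have hE : ∀ i, 0 < E i := fun i => Real.exp_pos _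
  set S : Fin n → ℝ := fun k => ∑ ℓ ∈ Finset.univ.filter (fun ℓ : Fin n => k ≤ ℓ), E ℓ with hS
  set S' : Fin n → ℝ := fun k =>
    ∑ ℓ ∈ Finset.univ.filter (fun ℓ : Fin n => k ≤ ℓ), E (Equiv.swap z j ℓ) with hS'
  have hmemk : ∀ k : Fin n, k ∈ Finset.univ.filter (fun ℓ : Fin n => k ≤ ℓ) := by
    intro k; simp
  have hSpos : ∀ k, 0 < S k := fun k => Finset.sum_pos (fun i _ => hE i) ⟨k, hmemk k⟩
  have hS'pos : ∀ k, 0 < S' k := fun k => Finset.sum_pos (fun i _ => hE _) ⟨k, hmemk k⟩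
  have hP1 : PLProb β v σ = (∏ k, E k) / (∏ k, S k) := by
    rw [PLProb, Finset.prod_div_distrib]
  have hP2 : PLProb β v (σ * Equiv.swap z j) = (∏ k, E (Equiv.swap z j k)) / (∏ k, S' k) := by
    rw [PLProb, Finset.prod_div_distrib]
    simp only [hEdef, hS', Equiv.Perm.mul_apply]
  have hEprod : (∏ k, E (Equiv.swap z j k)) = ∏ k, E k := Equiv.prod_comp (Equiv.swap z j) E
  have hEne : (∏ k, E k) ≠ 0 := (Finset.prod_pos fun i _ => hE i).ne'
  have hSne : (∏ k, S k) ≠ 0 := (Finset.prod_pos fun i _ => hSpos i).ne'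
  have hS'ne : (∏ k, S' k) ≠ 0 := (Finset.prod_pos fun i _ => hS'pos i).ne'
  have hratio : PLProb β v σ / PLProb β v (σ * Equiv.swap z j) = ∏ k, (S' k / S k) := by
    rw [hP1, hP2, hEprod, Finset.prod_div_distrib, div_div_div_comm,
      div_self hEne, one_div, inv_div]
  -- S' k = S k outside the window
  have hout : ∀ k : Fin n, ¬(1 ≤ (k : ℕ) ∧ (k : ℕ) ≤ (j : ℕ)) → S' k = S k := by
    intro k hk
    by_cases h1 : 1 ≤ (k : ℕ)
    · have hjk : (j : ℕ) < (k : ℕ) := by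
        by_contra h
        exact hk ⟨h1, not_lt.mp h⟩
      apply Finset.sum_congr rfl
      intro ℓ hℓ
      simp only [Finset.mem_filter] at hℓ
      have hkl : (k : ℕ) ≤ (ℓ : ℕ) := hℓ.2
      have hlj : ℓ ≠ j := by
        intro h; subst h; omega
      have hlz : ℓ ≠ z := by
        intro h
        rw [h] at hkl; omega
      rw [Equiv.swap_apply_of_ne_of_ne hlz hlj]
    · have hk0 : (k : ℕ) = 0 := by omega
      have huniv : Finset.univ.filter (fun ℓ : Fin n => k ≤ ℓ) = Finset.univ := by
        apply Finset.filter_true_of_mem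
        intro ℓ _
        exact Fin.le_def.mpr (by omega)
      simp only [hS', hS, huniv]
      exact Equiv.sum_comp (Equiv.swap z j) E
  have hfilter : (∏ k, (S' k / S k)) =
      ∏ k ∈ Finset.univ.filter (fun k : Fin n => 1 ≤ (k : ℕ) ∧ (k : ℕ) ≤ (j : ℕ)),
        (S' k / S k) := by
    refine (Finset.prod_filter_of_ne ?_).symm
    intro x _ hx
    by_contra h
    exact hx (by rw [hout x h, div_self (hSpos x).ne'])
  -- identify S and S' inside the window
  have hin : ∀ k : Fin n, 1 ≤ (k : ℕ) → (k : ℕ) ≤ (j : ℕ) →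
      S k = E j + (∑ ℓ ∈ Finset.univ.filter (fun ℓ : Fin n => k ≤ ℓ ∧ ℓ ≠ j), E ℓ) ∧
      S' k = E z + (∑ ℓ ∈ Finset.univ.filter (fun ℓ : Fin n => k ≤ ℓ ∧ ℓ ≠ j), E ℓ) := by
    intro k h1 h2
    have hjs : j ∈ Finset.univ.filter (fun ℓ : Fin n => k ≤ ℓ) := by
      simp only [Finset.mem_filter, Finset.mem_univ, true_and]
      exact Fin.le_def.mpr h2
    have hers : (Finset.univ.filter (fun ℓ : Fin n => k ≤ ℓ)).erase j =
        Finset.univ.filter (fun ℓ : Fin n => k ≤ ℓ ∧ ℓ ≠ j) := by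
      ext ℓ
      simp only [Finset.mem_erase, Finset.mem_filter, Finset.mem_univ, true_and]
      tauto
    constructor
    · show (∑ ℓ ∈ Finset.univ.filter (fun ℓ : Fin n => k ≤ ℓ), E ℓ) = _
      rw [← Finset.add_sum_erase _ E hjs, hers]
    · show (∑ ℓ ∈ Finset.univ.filter (fun ℓ : Fin n => k ≤ ℓ), E (Equiv.swap z j ℓ)) = _
      rw [← Finset.add_sum_erase _ (fun ℓ => E (Equiv.swap z j ℓ)) hjs, hers,
        Equiv.swap_apply_right]
      congr 1
      apply Finset.sum_congr rfl
      intro ℓ hℓ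
      simp only [Finset.mem_filter] at hℓ
      have hkl : (k : ℕ) ≤ (ℓ : ℕ) := hℓ.2.1
      have hlz : ℓ ≠ z := by
        intro h; rw [h] at hkl; omega
      rw [Equiv.swap_apply_of_ne_of_ne hlz hℓ.2.2]
  have hmain : (∏ k, (S' k / S k)) =
      ∏ k ∈ Finset.univ.filter (fun k : Fin n => 1 ≤ (k : ℕ) ∧ (k : ℕ) ≤ (j : ℕ)),
        ((E z + ∑ ℓ ∈ Finset.univ.filter (fun ℓ : Fin n => k ≤ ℓ ∧ ℓ ≠ j), E ℓ) /
         (E j + ∑ ℓ ∈ Finset.univ.filter (fun ℓ : Fin n => k ≤ ℓ ∧ ℓ ≠ j), E ℓ)) := by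
    rw [hfilter]
    apply Finset.prod_congr rfl
    intro k hk
    simp only [Finset.mem_filter, Finset.mem_univ, true_and] at hk
    obtain ⟨hSk, hS'k⟩ := hin k hk.1 hk.2
    rw [hSk, hS'k]
  have hEj_le : E j ≤ E z := by
    apply Real.exp_le_exp.mpr
    gcongr
  have hfac : ∀ k : Fin n, (1:ℝ) ≤
      (E z + ∑ ℓ ∈ Finset.univ.filter (fun ℓ : Fin n => k ≤ ℓ ∧ ℓ ≠ j), E ℓ) /
      (E j + ∑ ℓ ∈ Finset.univ.filter (fun ℓ : Fin n => k ≤ ℓ ∧ ℓ ≠ j), E ℓ) := by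
    intro k
    have hA : 0 ≤ ∑ ℓ ∈ Finset.univ.filter (fun ℓ : Fin n => k ≤ ℓ ∧ ℓ ≠ j), E ℓ :=
      Finset.sum_nonneg fun i _ => (hE i).le
    have hden : 0 < E j + ∑ ℓ ∈ Finset.univ.filter (fun ℓ : Fin n => k ≤ ℓ ∧ ℓ ≠ j), E ℓ := by
      have := hE j; linarith
    rw [one_le_div hden]
    linarith
  constructor
  · rw [hratio, hmain]
  · rw [hratio, hmain]
    exact le_trans (le_of_eq Finset.prod_const_one.symm)
      (Finset.prod_le_prod (fun i _ => zero_le_one) (fun i _ => hfac i))
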